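/- For an algebra 𝔸, a finite set S, and a subset X ⊆ A^(2^S), the |S|-dimensional congruence generated by X equals the iterated directional transitive closure of the |S|-dimensional tolerance generated by X: Θ_S(X) = tc(tol_S(X)). -/

import Mathlib

/-!
Closing a tolerance transitively in one direction `i` gives again a tolerance. Compatibility
holds because the `i`-faces of a tolerance form a quasireflexive compatible relation, so chains
of different lengths can be padded by reflexive steps and combined coordinatewise. Reflexivity
and symmetry in a direction `j ≠ i` are closure under reindexings of the vertices that fix the
coordinate `i`, and such reindexings map `i`-chains to `i`-chains. So `tc(tol X)` is an
increasing union of tolerances, hence a tolerance, and it is transitive in every direction since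
every direction recurs in the sequence. Conversely, a congruence containing `X` contains
`tol X` and, being transitive, each of its directional closures.
-/

universe u v

structure Signature : Type 1 where
  ops : Type
  arity : ops → ℕ

class Alg (σ : Signature) (A : Type u) : Type u where
  interp : ∀ o : σ.ops, (Fin (σ.arity o) → A) → A

/-- A labeled `S`-dimensional cube with vertices labeled by elements of `A`. -/
abbrev Cube (S : Type v) (A : Type u) : Type (max u v) := (S → Bool) → A

section Defs

variable {A : Type u} {B : Type u} {S : Type v}

def Quasireflexive (R : Set (B × B)) : Prop :=
  ∀ a b : B, (a, b) ∈ R → (a, a) ∈ R ∧ (b, b) ∈ R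

def SymmRel (R : Set (B × B)) : Prop := ∀ a b : B, (a, b) ∈ R → (b, a) ∈ R

def TransRel (R : Set (B × B)) : Prop :=
  ∀ a b c : B, (a, b) ∈ R → (b, c) ∈ R → (a, c) ∈ R

def face [DecidableEq S] (i : S) (b : Bool) (γ : Cube S A) : Cube {x : S // x ≠ i} A :=
  fun f => γ fun j => if h : j = i then b else f ⟨j, h⟩

def facesRel [DecidableEq S] (i : S) (R : Set (Cube S A)) :
    Set (Cube {x : S // x ≠ i} A × Cube {x : S // x ≠ i} A) :=
  {p | ∃ γ ∈ R, p = (face i false γ, face i true γ)}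

def SRefl [DecidableEq S] (R : Set (Cube S A)) : Prop := ∀ i : S, Quasireflexive (facesRel i R)
def SSymm [DecidableEq S] (R : Set (Cube S A)) : Prop := ∀ i : S, SymmRel (facesRel i R)
def STrans [DecidableEq S] (R : Set (Cube S A)) : Prop := ∀ i : S, TransRel (facesRel i R)

def glue (i : S) (a b : Cube {x : S // x ≠ i} A) : Cube S A :=
  fun f => if f i then b (fun j => f j.val) else a (fun j => f j.val)

def reflMap [DecidableEq S] (i : S) (b : Bool) (γ : Cube S A) : Cube S A :=
  glue i (face i b γ) (face i b γ)

def symMap [DecidableEq S] (i : S) (γ : Cube S A) : Cube S A :=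
  glue i (face i true γ) (face i false γ)

def cut (Q : Set S) [DecidablePred (· ∈ Q)] (γ : Cube S A) :
    Cube {x : S // x ∈ Q} (Cube {x : S // x ∉ Q} A) :=
  fun f g => γ fun j => if h : j ∈ Q then f ⟨j, h⟩ else g ⟨j, h⟩

def cutProj (Q : Set S) [DecidablePred (· ∈ Q)] (R : Set (Cube S A))
    (f : {x : S // x ∈ Q} → Bool) : Set (Cube {x : S // x ∉ Q} A) :=
  (fun γ => cut Q γ f) '' R

variable (σ : Signature)

def CompatCube [Alg σ A] (R : Set (Cube S A)) : Prop :=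
  ∀ (o : σ.ops) (γ : Fin (σ.arity o) → Cube S A), (∀ k, γ k ∈ R) →
    (fun f => Alg.interp (A := A) o fun k => γ k f) ∈ R

def CompatRel [Alg σ A] (θ : Set (A × A)) : Prop :=
  ∀ (o : σ.ops) (x y : Fin (σ.arity o) → A), (∀ k, (x k, y k) ∈ θ) →
    (Alg.interp (A := A) o x, Alg.interp (A := A) o y) ∈ θ

def IsCongruence [Alg σ A] (θ : Set (A × A)) : Prop :=
  (∀ a : A, (a, a) ∈ θ) ∧ SymmRel θ ∧ TransRel θ ∧ CompatRel σ θ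

def IsTolerance [Alg σ A] [DecidableEq S] (R : Set (Cube S A)) : Prop :=
  CompatCube σ R ∧ SRefl R ∧ SSymm R

def IsHCongruence [Alg σ A] [DecidableEq S] (R : Set (Cube S A)) : Prop :=
  IsTolerance σ R ∧ STrans R

def subalgGen [Alg σ A] (X : Set (Cube S A)) : Set (Cube S A) :=
  ⋂₀ {R : Set (Cube S A) | CompatCube σ R ∧ X ⊆ R}

def tolGen [Alg σ A] [DecidableEq S] (X : Set (Cube S A)) : Set (Cube S A) :=
  ⋂₀ {R : Set (Cube S A) | IsTolerance σ R ∧ X ⊆ R}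

def congGen [Alg σ A] [DecidableEq S] (X : Set (Cube S A)) : Set (Cube S A) :=
  ⋂₀ {R : Set (Cube S A) | IsHCongruence σ R ∧ X ⊆ R}

def cubeAt (i : S) (p : A × A) : Cube S A := fun f => bif f i then p.2 else p.1

def cubeSet (i : S) (θ : Set (A × A)) : Set (Cube S A) := cubeAt i '' θ

def MRel [Alg σ A] [DecidableEq S] (θ : S → Set (A × A)) : Set (Cube S A) :=
  tolGen σ (⋃ i : S, cubeSet i (θ i))

def DeltaRel [Alg σ A] [DecidableEq S] (θ : S → Set (A × A)) : Set (Cube S A) :=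
  congGen σ (⋃ i : S, cubeSet i (θ i))

def rectRel [DecidableEq S] (θ : S → Set (A × A)) : Set (Cube S A) :=
  {γ | ∀ (i : S) (f : {x : S // x ≠ i} → Bool), (face i false γ f, face i true γ f) ∈ θ i}

def dirClosure [DecidableEq S] (i : S) (R : Set (Cube S A)) : Set (Cube S A) :=
  {γ | Relation.TransGen (fun a b : Cube {x : S // x ≠ i} A => (a, b) ∈ facesRel i R)
      (face i false γ) (face i true γ)}

def Centrality [DecidableEq S] [Fintype S] (δ : Set (A × A)) (i : S)
    (R : Set (Cube S A)) : Prop :=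
  ¬ ∃ γ ∈ R, Nat.card {f : {x : S // x ≠ i} → Bool //
      (face i false γ f, face i true γ f) ∈ δ} = 2 ^ (Fintype.card S - 1) - 1

end Defs

def finMod (n : ℕ) [NeZero n] (j : ℕ) : Fin n :=
  ⟨j % n, Nat.mod_lt _ (Nat.pos_of_ne_zero (NeZero.ne n))⟩

def tcSeq {A : Type u} {n : ℕ} [NeZero n] (Y : Set (Cube (Fin n) A)) :
    ℕ → Set (Cube (Fin n) A)
  | 0 => dirClosure (finMod n 0) Y
  | j + 1 => dirClosure (finMod n (j + 1)) (tcSeq Y j)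

def tcClosure {A : Type u} {n : ℕ} [NeZero n] (Y : Set (Cube (Fin n) A)) :
    Set (Cube (Fin n) A) := ⋃ j : ℕ, tcSeq Y j

def lastIdx (n : ℕ) [NeZero n] : Fin n :=
  ⟨n - 1, Nat.sub_lt (Nat.pos_of_ne_zero (NeZero.ne n)) Nat.one_pos⟩

def tcComm (σ : Signature) {A : Type u} [Alg σ A] (n : ℕ) [NeZero n]
    (θ : Fin n → Set (A × A)) : Set (A × A) :=
  ⋂₀ {δ : Set (A × A) | IsCongruence σ δ ∧ Centrality δ (lastIdx n) (MRel σ θ)}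

def hComm (σ : Signature) {A : Type u} [Alg σ A] (n : ℕ) [NeZero n]
    (θ : Fin n → Set (A × A)) : Set (A × A) :=
  ⋂₀ {δ : Set (A × A) | IsCongruence σ δ ∧ Centrality δ (lastIdx n) (DeltaRel σ θ)}

inductive Term (σ : Signature) (k : ℕ) : Type
  | var : Fin k → Term σ k
  | app : (o : σ.ops) → (Fin (σ.arity o) → Term σ k) → Term σ k

def Term.eval {σ : Signature} {k : ℕ} {A : Type u} [Alg σ A] :
    Term σ k → (Fin k → A) → A
  | .var i, v => v i
  | .app o ts, v => Alg.interp (A := A) o fun j => (ts j).eval v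

def IsTaylorAlg (σ : Signature) (A : Type u) [Alg σ A] : Prop :=
  ∃ (m : ℕ) (t : Term σ (m + 1)),
    (∀ a : A, t.eval (fun _ => a) = a) ∧
    ∀ e : Fin (m + 1), ∃ u v : Fin (m + 1) → Bool, u e = false ∧ v e = true ∧
      ∀ x y : A, t.eval (fun i => bif u i then y else x)
               = t.eval (fun i => bif v i then y else x)

open Classical in
noncomputable def comCube {A : Type u} (n : ℕ) (x y : A) : Cube (Fin n) A :=
  fun f => if ∀ i, f i = true then y else x

def iSupported {A : Type u} {S : Type v} [DecidableEq S] (i : S) (γ : Cube S A)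
    (x y : A) : Prop :=
  face i false γ (fun _ => true) = x ∧ face i true γ (fun _ => true) = y ∧
  ∀ f : {z : S // z ≠ i} → Bool, f ≠ (fun _ => true) →
    face i false γ f = face i true γ f

def sqCube {A : Type u} (a b c d : A) : Cube (Fin 2) A :=
  fun f => if f 0 then (if f 1 then d else c) else (if f 1 then b else a)

def lcs (σ : Signature) {A : Type u} [Alg σ A] (θ : Set (A × A)) : ℕ → Set (A × A)
  | 0 => θ
  | n + 1 => tcComm σ 2 ![θ, lcs σ θ n]

def diagRel (A : Type u) : Set (A × A) := {p : A × A | p.1 = p.2}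


open Relation

lemma transGen_apply_of_quasirefl {ι B : Type*} [Finite ι] {r : B → B → Prop}
    (hr : ∀ x y, r x y → r x x ∧ r y y) (op : (ι → B) → B)
    (hop : ∀ x y : ι → B, (∀ k, r (x k) (y k)) → r (op x) (op y))
    {a b : ι → B} (h : ∀ k, TransGen r (a k) (b k)) : TransGen r (op a) (op b) := by
  classical
  cases nonempty_fintype ι
  have ha : ∀ k, r (a k) (a k) := fun k => by
    obtain ⟨c, hac, -⟩ := TransGen.head'_iff.mp (h k)
    exact (hr _ _ hac).1
  have hb : ∀ k, r (b k) (b k) := fun k => by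
    obtain ⟨c, -, hcb⟩ := TransGen.tail'_iff.mp (h k)
    exact (hr _ _ hcb).2
  -- Change the arguments from `a` to `b` one coordinate at a time, padding the other
  -- coordinates with reflexive steps.
  suffices ∀ T : Finset ι, TransGen r (op a) (op (T.piecewise b a)) by
    simpa using this Finset.univ
  intro T
  induction T using Finset.induction_on with
  | empty => simpa using TransGen.single (hop a a ha)
  | insert k T hk ih =>
    set x := T.piecewise b a
    have hx : ∀ l, r (x l) (x l) := fun l => by
      by_cases hl : l ∈ T <;> simp [x, hl, ha, hb]
    have hxk : Function.update x k (a k) = x := by simp [x, hk]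
    have step :
        TransGen r (op (Function.update x k (a k))) (op (Function.update x k (b k))) := by
      refine TransGen.lift (fun w => op (Function.update x k w))
        (fun u v huv => hop _ _ fun l => ?_) _ _ (h k)
      by_cases hl : l = k
      · subst hl; simpa using huv
      · simpa [hl] using hx l
    rw [hxk] at step
    rw [Finset.piecewise_insert]
    exact ih.trans step

section Cubes

variable {A : Type u} {S : Type v} [DecidableEq S]

@[simp]
lemma face_glue_false (i : S) (a b : Cube {x : S // x ≠ i} A) :
    face i false (glue i a b) = a := by
  funext f
  simp only [face, glue, ↓reduceDIte, Bool.false_eq_true, ↓reduceIte]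
  congr 1
  funext j
  exact dif_neg j.2

@[simp]
lemma face_glue_true (i : S) (a b : Cube {x : S // x ≠ i} A) :
    face i true (glue i a b) = b := by
  funext f
  simp only [face, glue, ↓reduceDIte, ↓reduceIte]
  congr 1
  funext j
  exact dif_neg j.2

@[simp]
lemma glue_face (i : S) (γ : Cube S A) :
    glue i (face i false γ) (face i true γ) = γ := by
  funext f
  have hf : (fun j => if h : j = i then f i else f j) = f := by
    funext j
    split_ifs with h
    · rw [h]
    · rfl
  unfold glue face
  cases h : f i <;> simp only [Bool.false_eq_true, ↓reduceIte] <;> rw [← h, hf]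

lemma mem_facesRel_iff {i : S} {R : Set (Cube S A)} {a b : Cube {x : S // x ≠ i} A} :
    (a, b) ∈ facesRel i R ↔ glue i a b ∈ R := by
  constructor
  · rintro ⟨γ, hγ, hab⟩
    simp only [Prod.mk.injEq] at hab
    rwa [hab.1, hab.2, glue_face]
  · exact fun h => ⟨glue i a b, h, by simp⟩

lemma facesRel_mono (i : S) {R R' : Set (Cube S A)} (h : R ⊆ R') :
    facesRel i R ⊆ facesRel i R' := by
  rintro p ⟨γ, hγ, rfl⟩
  exact ⟨γ, h hγ, rfl⟩

lemma facesRel_iUnion {ι : Type*} (i : S) (R : ι → Set (Cube S A)) :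
    facesRel i (⋃ k, R k) = ⋃ k, facesRel i (R k) := by
  ext p
  simp only [facesRel, Set.mem_iUnion, Set.mem_ofPred_eq]
  grind

lemma quasireflexive_facesRel_iff {j : S} {R : Set (Cube S A)} :
    Quasireflexive (facesRel j R) ↔ ∀ γ ∈ R, ∀ b, reflMap j b γ ∈ R := by
  constructor
  · intro hR γ hγ b
    have := hR _ _ ⟨γ, hγ, rfl⟩
    cases b
    · exact mem_facesRel_iff.mp this.1
    · exact mem_facesRel_iff.mp this.2
  · intro hR a b hab
    simp only [mem_facesRel_iff] at hab ⊢
    simpa [reflMap] using And.intro (hR _ hab false) (hR _ hab true)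

lemma symmRel_facesRel_iff {j : S} {R : Set (Cube S A)} :
    SymmRel (facesRel j R) ↔ ∀ γ ∈ R, symMap j γ ∈ R := by
  constructor
  · exact fun hR γ hγ => mem_facesRel_iff.mp (hR _ _ ⟨γ, hγ, rfl⟩)
  · intro hR a b hab
    rw [mem_facesRel_iff] at hab ⊢
    simpa [symMap] using hR _ hab

def cubeComap (u : S → Bool → Bool) (γ : Cube S A) : Cube S A :=
  fun f => γ fun m => u m (f m)

lemma face_cubeComap {i : S} {c : Bool} {u : S → Bool → Bool} (hu : u i c = c) (γ : Cube S A) :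
    face i c (cubeComap u γ) = cubeComap (fun k : {x : S // x ≠ i} => u k) (face i c γ) := by
  funext f
  simp only [face, cubeComap]
  congr 1
  funext m
  by_cases hm : m = i
  · subst hm; simp [hu]
  · simp [hm]

lemma reflMap_eq_cubeComap (j : S) (b : Bool) (γ : Cube S A) :
    reflMap j b γ = cubeComap (fun m c => if m = j then b else c) γ := by
  funext g
  simp only [reflMap, glue, ite_self, face, cubeComap, dite_eq_ite]

lemma symMap_eq_cubeComap (j : S) (γ : Cube S A) :
    symMap j γ = cubeComap (fun m c => if m = j then !c else c) γ := by
  funext g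
  simp only [symMap, glue, face, cubeComap]
  cases h : g j <;> simp only [↓reduceIte, Bool.false_eq_true] <;> congr 1 <;> funext m <;>
    by_cases hm : m = j <;> simp [hm, h]

end Cubes

instance Pi.instAlg {σ : Signature} {A : Type u} {T : Type v} [Alg σ A] : Alg σ (T → A) :=
  ⟨fun o x t => Alg.interp o fun k => x k t⟩

section Tolerances

variable {A : Type u} {S : Type v} [DecidableEq S] {σ : Signature} [Alg σ A]

lemma CompatCube.compatRel_facesRel {R : Set (Cube S A)} (hR : CompatCube σ R) (i : S) :
    CompatRel σ (facesRel i R) := by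
  intro o x y hxy
  simp only [mem_facesRel_iff] at hxy ⊢
  convert hR o _ hxy using 1
  funext f
  unfold glue
  split_ifs <;> rfl

lemma isTolerance_iff {R : Set (Cube S A)} :
    IsTolerance σ R ↔
      CompatCube σ R ∧ ∀ j, ∀ γ ∈ R, (∀ b, reflMap j b γ ∈ R) ∧ symMap j γ ∈ R := by
  simp only [IsTolerance, SRefl, SSymm, quasireflexive_facesRel_iff, symmRel_facesRel_iff]
  grind

lemma isTolerance_sInter {𝒮 : Set (Set (Cube S A))} (h : ∀ R ∈ 𝒮, IsTolerance σ R) :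
    IsTolerance σ (⋂₀ 𝒮) := by
  simp only [isTolerance_iff] at h ⊢
  refine ⟨fun o γ hγ R hR => (h R hR).1 o γ fun k => hγ k R hR,
    fun j γ hγ => ⟨fun b R hR => ((h R hR).2 j γ (hγ R hR)).1 b,
      fun R hR => ((h R hR).2 j γ (hγ R hR)).2⟩⟩

lemma isTolerance_iUnion {R : ℕ → Set (Cube S A)} (hmono : Monotone R)
    (h : ∀ k, IsTolerance σ (R k)) : IsTolerance σ (⋃ k, R k) := by
  simp only [isTolerance_iff, Set.mem_iUnion] at h ⊢
  refine ⟨fun o γ hγ => ?_, fun j γ ⟨k, hk⟩ => ?_⟩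
  · simp only [Set.mem_iUnion] at hγ
    choose js hjs using hγ
    obtain ⟨K, hK⟩ := (Set.finite_range js).bddAbove
    exact Set.mem_iUnion.mpr ⟨K, (h K).1 o γ fun k => hmono (hK ⟨k, rfl⟩) (hjs k)⟩
  · exact ⟨fun b => ⟨k, ((h k).2 j γ hk).1 b⟩, ⟨k, ((h k).2 j γ hk).2⟩⟩

lemma tolGen_isTolerance (X : Set (Cube S A)) : IsTolerance σ (tolGen σ X) :=
  isTolerance_sInter fun _ hR => hR.1

lemma subset_tolGen (X : Set (Cube S A)) : X ⊆ tolGen σ X :=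
  Set.subset_sInter fun _ hR => hR.2

lemma tolGen_subset {X R : Set (Cube S A)} (hR : IsTolerance σ R) (hX : X ⊆ R) :
    tolGen σ X ⊆ R :=
  Set.sInter_subset_of_mem ⟨hR, hX⟩

end Tolerances

section DirClosure

variable {A : Type u} {S : Type v} [DecidableEq S]

lemma subset_dirClosure (i : S) (R : Set (Cube S A)) : R ⊆ dirClosure i R :=
  fun γ hγ => TransGen.single ⟨γ, hγ, rfl⟩

lemma mem_facesRel_dirClosure_iff {i : S} {R : Set (Cube S A)}
    {a b : Cube {x : S // x ≠ i} A} :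
    (a, b) ∈ facesRel i (dirClosure i R) ↔
      TransGen (fun x y => (x, y) ∈ facesRel i R) a b := by
  simp [mem_facesRel_iff, dirClosure]

lemma dirClosure_subset {i : S} {R C : Set (Cube S A)} (hRC : R ⊆ C)
    (hC : TransRel (facesRel i C)) : dirClosure i R ⊆ C := by
  have hchain : ∀ {a b}, TransGen (fun x y => (x, y) ∈ facesRel i R) a b →
      (a, b) ∈ facesRel i C := by
    intro a b h
    induction h with
    | single h => exact facesRel_mono i hRC h
    | tail _ h ih => exact hC _ _ _ ih (facesRel_mono i hRC h)
  intro γ hγ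
  rw [← glue_face i γ, ← mem_facesRel_iff]
  exact hchain hγ

lemma cubeComap_mem_dirClosure {i : S} {R : Set (Cube S A)} {u : S → Bool → Bool}
    (hu : ∀ c, u i c = c) (hR : ∀ γ ∈ R, cubeComap u γ ∈ R) {γ : Cube S A}
    (hγ : γ ∈ dirClosure i R) : cubeComap u γ ∈ dirClosure i R := by
  have hstep : ∀ x y, (x, y) ∈ facesRel i R →
      (cubeComap (fun k : {x : S // x ≠ i} => u k) x,
        cubeComap (fun k : {x : S // x ≠ i} => u k) y) ∈ facesRel i R := by
    rintro _ _ ⟨ρ, hρ, h⟩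
    simp only [Prod.mk.injEq] at h
    refine ⟨cubeComap u ρ, hR ρ hρ, ?_⟩
    rw [h.1, h.2, face_cubeComap (hu false), face_cubeComap (hu true)]
  have : TransGen (fun x y => (x, y) ∈ facesRel i R)
      (cubeComap (fun k : {x : S // x ≠ i} => u k) (face i false γ))
      (cubeComap (fun k : {x : S // x ≠ i} => u k) (face i true γ)) :=
    TransGen.lift _ hstep _ _ hγ
  rwa [← face_cubeComap (hu false), ← face_cubeComap (hu true)] at this

variable {σ : Signature} [Alg σ A]

lemma dirClosure_isTolerance {R : Set (Cube S A)} (hR : IsTolerance σ R) (i : S) :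
    IsTolerance σ (dirClosure i R) := by
  have hq : Quasireflexive (facesRel i R) := hR.2.1 i
  refine ⟨fun o γ hγ => transGen_apply_of_quasirefl hq _ (hR.1.compatRel_facesRel i o) hγ,
    fun j => ?_, fun j => ?_⟩
  · rcases eq_or_ne j i with rfl | hji
    · intro a b hab
      rw [mem_facesRel_dirClosure_iff] at hab
      obtain ⟨c, hac, -⟩ := TransGen.head'_iff.mp hab
      obtain ⟨d, -, hdb⟩ := TransGen.tail'_iff.mp hab
      simp only [mem_facesRel_dirClosure_iff]
      exact ⟨.single (hq _ _ hac).1, .single (hq _ _ hdb).2⟩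
    · have hRj := quasireflexive_facesRel_iff.mp (hR.2.1 j)
      refine quasireflexive_facesRel_iff.mpr fun γ hγ b => ?_
      simp only [reflMap_eq_cubeComap] at hRj ⊢
      exact cubeComap_mem_dirClosure (u := fun m c => if m = j then b else c)
        (fun c => if_neg hji.symm) (fun ρ hρ => hRj ρ hρ b) hγ
  · rcases eq_or_ne j i with rfl | hji
    · intro a b hab
      rw [mem_facesRel_dirClosure_iff] at hab ⊢
      exact TransGen.mono (fun x y h => hR.2.2 j y x h) _ _ (TransGen.swap _ _ hab)
    · have hRj := symmRel_facesRel_iff.mp (hR.2.2 j)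
      refine symmRel_facesRel_iff.mpr fun γ hγ => ?_
      simp only [symMap_eq_cubeComap] at hRj ⊢
      exact cubeComap_mem_dirClosure (u := fun m c => if m = j then !c else c)
        (fun c => if_neg hji.symm) hRj hγ

end DirClosure

section TcClosure

variable {A : Type u} {n : ℕ} [NeZero n]

lemma tcSeq_monotone (Y : Set (Cube (Fin n) A)) : Monotone (tcSeq Y) :=
  monotone_nat_of_le_succ fun _ => subset_dirClosure _ _

lemma subset_tcClosure (Y : Set (Cube (Fin n) A)) : Y ⊆ tcClosure Y :=
  (subset_dirClosure _ Y).trans (Set.subset_iUnion (tcSeq Y) 0)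

lemma tcClosure_subset {Y C : Set (Cube (Fin n) A)} (hYC : Y ⊆ C) (hC : STrans C) :
    tcClosure Y ⊆ C := by
  refine Set.iUnion_subset fun j => ?_
  induction j with
  | zero => exact dirClosure_subset hYC (hC _)
  | succ j ih => exact dirClosure_subset ih (hC _)

lemma tcClosure_isTolerance {σ : Signature} [Alg σ A] {Y : Set (Cube (Fin n) A)}
    (hY : IsTolerance σ Y) : IsTolerance σ (tcClosure Y) := by
  refine isTolerance_iUnion (tcSeq_monotone Y) fun j => ?_
  induction j with
  | zero => exact dirClosure_isTolerance hY _
  | succ j ih => exact dirClosure_isTolerance ih _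

lemma exists_finMod_succ_eq (i : Fin n) (M : ℕ) : ∃ k ≥ M, finMod n (k + 1) = i := by
  have hn : 0 < n := Nat.pos_of_ne_zero (NeZero.ne n)
  refine ⟨n * M + (n - 1) + i, ?_, Fin.ext ?_⟩
  · have := Nat.le_mul_of_pos_left M hn
    omega
  · have : n * M + (n - 1) + i + 1 = i + n * (M + 1) := by
      rw [Nat.mul_succ]
      omega
    simp only [finMod, this, Nat.add_mul_mod_self_left, Nat.mod_eq_of_lt i.isLt]

lemma tcClosure_sTrans (Y : Set (Cube (Fin n) A)) : STrans (tcClosure Y) := by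
  intro i a b c hab hbc
  simp only [tcClosure, facesRel_iUnion, Set.mem_iUnion] at hab hbc ⊢
  obtain ⟨j₁, hab⟩ := hab
  obtain ⟨j₂, hbc⟩ := hbc
  obtain ⟨k, hk, hki⟩ := exists_finMod_succ_eq i (max j₁ j₂)
  refine ⟨k + 1, ?_⟩
  rw [tcSeq, hki, mem_facesRel_dirClosure_iff]
  exact .tail (.single (facesRel_mono i (tcSeq_monotone Y ((le_max_left _ _).trans hk)) hab))
    (facesRel_mono i (tcSeq_monotone Y ((le_max_right _ _).trans hk)) hbc)

end TcClosure

/-- the generated higher-dimensional congruence is the iterated directional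
transitive closure of the generated tolerance: `Θ_S(X) = tc(tol_S(X))`. -/
theorem stmt7 {A : Type u} (σ : Signature) [Alg σ A] (n : ℕ) [NeZero n]
    (X : Set (Cube (Fin n) A)) :
    congGen σ X = tcClosure (tolGen σ X) := by
  have hT : IsTolerance σ (tolGen σ X) := tolGen_isTolerance X
  apply Set.Subset.antisymm
  · exact Set.sInter_subset_of_mem ⟨⟨tcClosure_isTolerance hT, tcClosure_sTrans _⟩,
      (subset_tolGen X).trans (subset_tcClosure _)⟩
  · exact Set.subset_sInter fun C ⟨hC, hXC⟩ => tcClosure_subset (tolGen_subset hC.1 hXC) hC.2
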